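/- arXiv:1110.3463 — 3 statements merged into one kernel-verified Lean document; each statement's English description precedes it below -/
import Mathlib

section
/- Let s ≥ 1, k ≥ 2s, v = 2k, and let r be the least nonnegative residue of s(k-s+1)(k-s) modulo 2(k-s)+1. Then: r = 2(k-s) - (s-4)/4 if s ≡ 0 (mod 4); r = (k-s) - (s-2)/4 if s ≡ 2 (mod 4); r = (k-s)/2 - (s-1)/4 if (s ≡ 1 mod 4 and k is odd) or (s ≡ 3 mod 4 and k is even); and r = (3/2)(k-s) - (s-3)/4 if (s ≡ 3 mod 4 and k is odd) or (s ≡ 1 mod 4 and k is even). -/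
/-!
Put `m = k - s`, so the modulus is `n = 2m + 1`. Since `4 m (m + 1) = n² - 1`, the number
`s (m + 1) m` is congruent to `-s/4` modulo the odd number `n`: the residue `r` is the unique
`0 ≤ r < n` with `n ∣ 4r + s`. In each case the claimed value `c` satisfies `4c + s = j n` for
`j = 4, 2, 1, 3` respectively.
-/

lemma isCoprime_two_mul_add_one_four (m : ℤ) : IsCoprime (2 * m + 1) 4 :=
  ⟨2 * m + 1, -(m ^ 2 + m), by ring⟩

lemma mul_add_one_mul_emod_two_mul_add_one {s m c : ℤ} (hc₀ : 0 ≤ c) (hc : c < 2 * m + 1)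
    (hdvd : 2 * m + 1 ∣ 4 * c + s) : s * (m + 1) * m % (2 * m + 1) = c := by
  obtain ⟨q, hq⟩ := hdvd
  have h4 : 2 * m + 1 ∣ 4 * (c - s * (m + 1) * m) :=
    ⟨q - s * (2 * m + 1), by linear_combination hq⟩
  have hmod : s * (m + 1) * m ≡ c [ZMOD 2 * m + 1] :=
    Int.modEq_iff_dvd.mpr ((isCoprime_two_mul_add_one_four m).dvd_of_dvd_mul_left h4)
  exact hmod.eq.trans (Int.emod_eq_of_lt hc₀ hc)

theorem residue_formula_general (s k r : ℤ) (hs : 1 ≤ s) (hk : 2 * s ≤ k)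
    (hr : r = (s * (k - s + 1) * (k - s)) % (2 * (k - s) + 1)) :
    (s % 4 = 0 → r = 2 * (k - s) - (s - 4) / 4) ∧
    (s % 4 = 2 → r = (k - s) - (s - 2) / 4) ∧
    ((s % 4 = 1 ∧ Odd k) ∨ (s % 4 = 3 ∧ Even k) → r = (k - s) / 2 - (s - 1) / 4) ∧
    ((s % 4 = 3 ∧ Odd k) ∨ (s % 4 = 1 ∧ Even k) → r = 3 * (k - s) / 2 - (s - 3) / 4) := by
  have hr_eq (c j : ℤ) (hc₀ : 0 ≤ c) (hc : c < 2 * (k - s) + 1)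
      (hj : 4 * c + s = (2 * (k - s) + 1) * j) : r = c :=
    hr ▸ mul_add_one_mul_emod_two_mul_add_one hc₀ hc ⟨j, hj⟩
  simp only [Int.odd_iff, Int.even_iff]
  exact ⟨fun _ => hr_eq _ 4 (by omega) (by omega) (by omega),
    fun _ => hr_eq _ 2 (by omega) (by omega) (by omega),
    fun _ => hr_eq _ 1 (by omega) (by omega) (by omega),
    fun _ => hr_eq _ 3 (by omega) (by omega) (by omega)⟩

/-- The least nonnegative residue `r` of `s(k-s+1)(k-s)` modulo `2(k-s)+1` (with `v = 2k`),
computed case-by-case according to `s mod 4` and the parity of `k`. -/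
theorem residue_formula (s k v r : ℤ) (hs : 1 ≤ s) (hk : 2 * s ≤ k) (hv : v = 2 * k)
    (hr : r = (s * (k - s + 1) * (k - s)) % (2 * (k - s) + 1)) :
    (s % 4 = 0 → r = 2 * (k - s) - (s - 4) / 4) ∧
    (s % 4 = 2 → r = (k - s) - (s - 2) / 4) ∧
    ((s % 4 = 1 ∧ Odd k) ∨ (s % 4 = 3 ∧ Even k) → r = (k - s) / 2 - (s - 1) / 4) ∧
    ((s % 4 = 3 ∧ Odd k) ∨ (s % 4 = 1 ∧ Even k) → r = 3 * (k - s) / 2 - (s - 3) / 4) :=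
  residue_formula_general s k r hs hk hr
end

section
/- Let s ≥ 1, k ≥ 2s, v = 2k, and let r be the least nonnegative residue of s(k-s+1)(k-s) modulo 2(k-s)+1. Then 0 < r < 2(k-s)+1, i.e. r ≠ 0. -/
/-!
Write `n = k - s`. Since `2n + 1 - 2n = 1` and `2(n + 1) - (2n + 1) = 1`, the modulus `2n + 1` is
coprime to both `n` and `n + 1`, so it divides `s (n + 1) n` only if it divides `s`. That is
impossible for `0 < s ≤ n`.
-/

namespace Int

theorem isCoprime_two_mul_add_one_self (n : ℤ) : IsCoprime (2 * n + 1) n :=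
  ⟨1, -2, by ring⟩

theorem isCoprime_two_mul_add_one_add_one (n : ℤ) : IsCoprime (2 * n + 1) (n + 1) :=
  ⟨-1, 2, by ring⟩

theorem dvd_of_two_mul_add_one_dvd_mul_succ_mul {s n : ℤ} (h : 2 * n + 1 ∣ s * (n + 1) * n) :
    2 * n + 1 ∣ s :=
  (isCoprime_two_mul_add_one_add_one n).dvd_of_dvd_mul_right
    ((isCoprime_two_mul_add_one_self n).dvd_of_dvd_mul_right h)

theorem not_two_mul_add_one_dvd_mul_succ_mul {s n : ℤ} (hs : 0 < s) (hsn : s ≤ n) :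
    ¬ 2 * n + 1 ∣ s * (n + 1) * n := fun h => by
  have := Int.le_of_dvd hs (dvd_of_two_mul_add_one_dvd_mul_succ_mul h)
  omega

end Int

theorem residue_nonzero_general (s k r : ℤ) (hs : 1 ≤ s) (hk : 2 * s ≤ k)
    (hr : r = (s * (k - s + 1) * (k - s)) % (2 * (k - s) + 1)) :
    0 < r ∧ r < 2 * (k - s) + 1 := by
  have hm : 0 < 2 * (k - s) + 1 := by omega
  have hndvd : ¬ 2 * (k - s) + 1 ∣ s * (k - s + 1) * (k - s) :=
    Int.not_two_mul_add_one_dvd_mul_succ_mul (by omega) (by omega)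
  subst hr
  refine ⟨(Int.emod_nonneg _ hm.ne').lt_of_ne fun h => hndvd ?_, Int.emod_lt_of_pos _ hm⟩
  exact Int.dvd_of_emod_eq_zero h.symm

/-- The least nonnegative residue of `s(k-s+1)(k-s)` modulo `2(k-s)+1` (with `v = 2k`,
`s ≥ 1`, `k ≥ 2s`) is strictly between `0` and `2(k-s)+1`; in particular it is nonzero. -/
theorem residue_nonzero (s k v r : ℤ) (hs : 1 ≤ s) (hk : 2 * s ≤ k) (hv : v = 2 * k)
    (hr : r = (s * (k - s + 1) * (k - s)) % (2 * (k - s) + 1)) :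
    0 < r ∧ r < 2 * (k - s) + 1 :=
  residue_nonzero_general s k r hs hk hr
end

section
/- Let P be a monic polynomial of degree n over ℂ and let ξ_1, …, ξ_n be distinct complex numbers. Let Q(z) = ∏(z - ξ_i). Then every zero of P lies in the union of the closed disks Γ_i = { z : |z - ξ_i| ≤ n·|P(ξ_i)|/|Q'(ξ_i)| }. -/
/-!
Write `Q = ∏ (X - C ξᵢ)`. Since `P` and `Q` are both monic of degree `n`, `P - Q` has degree
`< n` and therefore equals its Lagrange interpolant at the nodes `ξᵢ`, where it takes the values
`P(ξᵢ)`. Evaluating the barycentric form of this interpolant at a zero `z` of `P` away from the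
nodes gives `∑ᵢ P(ξᵢ) / (Q'(ξᵢ) (z - ξᵢ)) = -1`, so one of the `n` terms has norm at least `1/n`,
which is the claimed bound for that `i`.
-/

open Polynomial Finset

namespace Lagrange

variable {F ι : Type*} [Field F] {s : Finset ι} {v : ι → F}

/-- Partial fraction expansion of `P / nodal s v` for a monic `P` of the same degree. -/
theorem eval_eq_eval_nodal_mul_one_add_sum {P : F[X]} (hP : P.Monic) (hdeg : P.natDegree = #s)
    (hvs : Set.InjOn v s) {x : F} (hx : ∀ i ∈ s, x ≠ v i) :
    P.eval x = (nodal s v).eval x *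
      (1 + ∑ i ∈ s, P.eval (v i) / ((derivative (nodal s v)).eval (v i) * (x - v i))) := by
  classical
  set R := P - nodal s v
  have hRdeg : R.degree < #s := by
    refine (degree_sub_lt_left ?_ hP.ne_zero ?_).trans_le ?_
    · rw [degree_nodal, degree_eq_natDegree hP.ne_zero, hdeg]
    · rw [hP.leadingCoeff, nodal_monic.leadingCoeff]
    · rw [degree_eq_natDegree hP.ne_zero, hdeg]
  have hRnode : ∀ i ∈ s, R.eval (v i) = P.eval (v i) := fun i hi => by
    simp only [R, eval_sub, eval_nodal_at_node hi, sub_zero]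
  have hR : R.eval x = (nodal s v).eval x *
      ∑ i ∈ s, P.eval (v i) / ((derivative (nodal s v)).eval (v i) * (x - v i)) := by
    rw [eq_interpolate hvs hRdeg, eval_interpolate_not_at_node _ hx]
    congr 1
    refine sum_congr rfl fun i hi => ?_
    rw [nodalWeight_eq_eval_derivative_nodal hi, hRnode i hi, div_eq_mul_inv, mul_inv]
    ring
  rw [mul_one_add, ← hR]
  simp only [R, eval_sub, add_sub_cancel]

theorem sum_div_derivative_nodal_mul_sub_eq_neg_one {P : F[X]} (hP : P.Monic)
    (hdeg : P.natDegree = #s) (hvs : Set.InjOn v s) {x : F} (hx : ∀ i ∈ s, x ≠ v i)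
    (hPx : P.eval x = 0) :
    ∑ i ∈ s, P.eval (v i) / ((derivative (nodal s v)).eval (v i) * (x - v i)) = -1 := by
  have h := eval_eq_eval_nodal_mul_one_add_sum hP hdeg hvs hx
  rw [hPx, eq_comm, mul_eq_zero, or_iff_right (eval_nodal_not_at_node hx)] at h
  exact eq_neg_of_add_eq_zero_right h

end Lagrange

theorem Finset.exists_norm_le_card_mul_norm_of_sum_eq {ι E : Type*} [SeminormedAddCommGroup E]
    {s : Finset ι} {f : ι → E} {a : E} (hsum : ∑ j ∈ s, f j = a) (ha : a ≠ 0) :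
    ∃ i ∈ s, ‖a‖ ≤ #s * ‖f i‖ := by
  have hs : s.Nonempty := nonempty_of_sum_ne_zero (hsum ▸ ha)
  obtain ⟨i, hi, hle⟩ := exists_le_of_sum_le hs
    (f := fun _ => ‖a‖ / #s) (g := fun i => ‖f i‖) <| by
    rw [sum_const, nsmul_eq_mul, mul_div_cancel₀ _ (by exact_mod_cast hs.card_ne_zero), ← hsum]
    exact norm_sum_le s f
  exact ⟨i, hi, (div_le_iff₀' (by exact_mod_cast hs.card_pos)).mp hle⟩

theorem norm_le_mul_norm_div_of_one_le_mul_norm_div_mul {𝕜 : Type*} [NormedField 𝕜]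
    {a b c : 𝕜} {n : ℝ} (h : 1 ≤ n * ‖c / (b * a)‖) : ‖a‖ ≤ n * ‖c‖ / ‖b‖ := by
  rw [norm_div, norm_mul, mul_div_assoc'] at h
  have hba : 0 < ‖b‖ * ‖a‖ := by
    by_contra! h0
    rw [h0.antisymm (by positivity), div_zero] at h
    exact absurd h zero_lt_one.not_ge
  rw [one_le_div₀ hba] at h
  rwa [le_div_iff₀ (pos_of_mul_pos_left hba (norm_nonneg a)), mul_comm]

theorem smith_bound_containment_general (n : ℕ)
    (P : Polynomial ℂ) (hP : P.Monic) (hdeg : P.natDegree = n)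
    (ξ : Fin n → ℂ) (hξ : Function.Injective ξ)
    (Q : Polynomial ℂ) (hQ : Q = ∏ i : Fin n, (X - C (ξ i))) :
    ∀ z : ℂ, P.eval z = 0 →
      ∃ i : Fin n, ‖z - ξ i‖ ≤
        n * ‖P.eval (ξ i)‖ / ‖(derivative Q).eval (ξ i)‖ := by
  intro z hz
  by_cases hnode : ∃ i, z = ξ i
  · obtain ⟨i, rfl⟩ := hnode
    exact ⟨i, by simp only [sub_self, norm_zero]; positivity⟩
  push Not at hnode
  rw [← Lagrange.nodal_eq] at hQ
  subst hQ
  have hsum := Lagrange.sum_div_derivative_nodal_mul_sub_eq_neg_one hP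
    (by rw [hdeg, card_univ, Fintype.card_fin]) hξ.injOn (fun i _ => hnode i) hz
  obtain ⟨i, -, hi⟩ := exists_norm_le_card_mul_norm_of_sum_eq hsum (neg_ne_zero.mpr one_ne_zero)
  rw [norm_neg, norm_one, card_univ, Fintype.card_fin] at hi
  exact ⟨i, norm_le_mul_norm_div_of_one_le_mul_norm_div_mul hi⟩

/-- Smith bound (containment part): if `P` is monic of degree `n` and `ξ₁,…,ξₙ` are
distinct points with `Q(z) = ∏ (z - ξᵢ)`, then every zero of `P` lies in some disk
`|z - ξᵢ| ≤ n·|P(ξᵢ)|/|Q'(ξᵢ)|`. -/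
theorem smith_bound_containment (n : ℕ) (hn : 1 ≤ n)
    (P : Polynomial ℂ) (hP : P.Monic) (hdeg : P.natDegree = n)
    (ξ : Fin n → ℂ) (hξ : Function.Injective ξ)
    (Q : Polynomial ℂ) (hQ : Q = ∏ i : Fin n, (X - C (ξ i))) :
    ∀ z : ℂ, P.eval z = 0 →
      ∃ i : Fin n, ‖z - ξ i‖ ≤
        n * ‖P.eval (ξ i)‖ / ‖(derivative Q).eval (ξ i)‖ :=
  smith_bound_containment_general n P hP hdeg ξ hξ Q hQ
end
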